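/- Let R be a ring. Then the supremum over the injective dimensions of all left R-modules of finite injective dimension is at most the supremum over the projective dimensions of all injective left R-modules. That is, fidim(R) ≤ spli(R). -/

import Mathlib

set_option linter.unusedVariables false

open CategoryTheory

universe u

namespace GP


variable (R : Type u) [Ring R]

/-- Flatness of a module over an arbitrary ring, via the equational criterion:
every linear relation among elements of `M` is trivial. -/
def IsFlatMod (M : ModuleCat.{u} R) : Prop :=
  ∀ (n : ℕ) (r : Fin n → R) (x : Fin n → M), (∑ i, r i • x i) = 0 →
    ∃ (m : ℕ) (a : Fin n → Fin m → R) (y : Fin m → M),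
      (∀ i, x i = ∑ j, a i j • y j) ∧ ∀ j, (∑ i, r i * a i j) = 0

/-- `ResDimLE R C n M` : there is an exact sequence
`0 → G_n → ⋯ → G_0 → M → 0` with each `G_i` in the class `C`. -/
def ResDimLE (C : ModuleCat.{u} R → Prop) : ℕ → ModuleCat.{u} R → Prop
  | 0, M => C M
  | n+1, M => ∃ (K G : ModuleCat.{u} R) (ι : K ⟶ G) (π : G ⟶ M),
      C G ∧ Function.Injective ι ∧ Function.Surjective π ∧
      Function.Exact ι π ∧ ResDimLE C n K

/-- `CoresDimLE R C n M` : there is an exact sequence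
`0 → M → G_0 → ⋯ → G_n → 0` with each `G_i` in the class `C`. -/
def CoresDimLE (C : ModuleCat.{u} R → Prop) : ℕ → ModuleCat.{u} R → Prop
  | 0, M => C M
  | n+1, M => ∃ (G K : ModuleCat.{u} R) (ι : M ⟶ G) (π : G ⟶ K),
      C G ∧ Function.Injective ι ∧ Function.Surjective π ∧
      Function.Exact ι π ∧ CoresDimLE C n K

/-- The resolution dimension of `M` with respect to the class `C`, in `ℕ∞`. -/
noncomputable def resDim (C : ModuleCat.{u} R → Prop) (M : ModuleCat.{u} R) : ℕ∞ :=
  sInf {n : ℕ∞ | ∃ k : ℕ, n = (k : ℕ∞) ∧ ResDimLE R C k M}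

/-- The coresolution dimension of `M` with respect to the class `C`, in `ℕ∞`. -/
noncomputable def coresDim (C : ModuleCat.{u} R → Prop) (M : ModuleCat.{u} R) : ℕ∞ :=
  sInf {n : ℕ∞ | ∃ k : ℕ, n = (k : ℕ∞) ∧ CoresDimLE R C k M}

/-- Projective dimension. -/
noncomputable def projDim (M : ModuleCat.{u} R) : ℕ∞ :=
  resDim R (fun N => Module.Projective R N) M

/-- Flat dimension. -/
noncomputable def flatDim (M : ModuleCat.{u} R) : ℕ∞ :=
  resDim R (IsFlatMod R) M

/-- Injective dimension. -/
noncomputable def injDim (M : ModuleCat.{u} R) : ℕ∞ :=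
  coresDim R (fun N => Module.Injective R N) M

/-- `spli R` : supremum of the projective dimensions of injective modules. -/
noncomputable def spli : ℕ∞ :=
  ⨆ (I : ModuleCat.{u} R) (_ : Module.Injective R I), projDim R I

/-- `silp R` : supremum of the injective dimensions of projective modules. -/
noncomputable def silp : ℕ∞ :=
  ⨆ (P : ModuleCat.{u} R) (_ : Module.Projective R P), injDim R P

/-- `sfli R` : supremum of the flat dimensions of injective modules. -/
noncomputable def sfli : ℕ∞ :=
  ⨆ (I : ModuleCat.{u} R) (_ : Module.Injective R I), flatDim R I

/-- `silf R` : supremum of the injective dimensions of flat modules. -/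
noncomputable def silf : ℕ∞ :=
  ⨆ (F : ModuleCat.{u} R) (_ : IsFlatMod R F), injDim R F

/-- Finitistic injective dimension. -/
noncomputable def fidim : ℕ∞ :=
  ⨆ (M : ModuleCat.{u} R) (_ : injDim R M ≠ ⊤), injDim R M

/-- Finitistic projective dimension. -/
noncomputable def findim : ℕ∞ :=
  ⨆ (M : ModuleCat.{u} R) (_ : projDim R M ≠ ⊤), projDim R M

/-- Finitistic flat dimension. -/
noncomputable def ffdim : ℕ∞ :=
  ⨆ (M : ModuleCat.{u} R) (_ : flatDim R M ≠ ⊤), flatDim R M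

/-- `M` is Gorenstein projective: it arises as a kernel in a totally acyclic
complex of projectives. -/
def IsGProj (M : ModuleCat.{u} R) : Prop :=
  ∃ (P : ℤ → ModuleCat.{u} R) (d : ∀ i : ℤ, P i ⟶ P (i + 1)),
    (∀ i, Module.Projective R (P i)) ∧
    (∀ i, Function.Exact (d i) (d (i + 1))) ∧
    (∀ (Q : ModuleCat.{u} R), Module.Projective R Q →
      ∀ (i : ℤ) (f : P (i + 1) ⟶ Q), d i ≫ f = 0 →
        ∃ g : P (i + 1 + 1) ⟶ Q, d (i + 1) ≫ g = f) ∧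
    (∃ (i : ℤ) (e : M ⟶ P i), Function.Injective e ∧ Function.Exact e (d i))

/-- `M` is Gorenstein injective: it arises as a kernel in a totally acyclic
complex of injectives. -/
def IsGInj (M : ModuleCat.{u} R) : Prop :=
  ∃ (I : ℤ → ModuleCat.{u} R) (d : ∀ i : ℤ, I i ⟶ I (i + 1)),
    (∀ i, Module.Injective R (I i)) ∧
    (∀ i, Function.Exact (d i) (d (i + 1))) ∧
    (∀ (J : ModuleCat.{u} R), Module.Injective R J →
      ∀ (i : ℤ) (f : J ⟶ I (i + 1)), f ≫ d (i + 1) = 0 →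
        ∃ g : J ⟶ I i, g ≫ d i = f) ∧
    (∃ (i : ℤ) (e : M ⟶ I i), Function.Injective e ∧ Function.Exact e (d i))

section BTensor

variable {R}

/-- The defining relations of the balanced tensor product `N ⊗_R M` of a right
`R`-module `N` and a left `R`-module `M`, inside `N ⊗_ℤ M`. -/
def brel (N : ModuleCat.{u} Rᵐᵒᵖ) (M : ModuleCat.{u} R) :
    Submodule ℤ (TensorProduct ℤ N M) :=
  Submodule.span ℤ
    {z | ∃ (s : R) (n : N) (m : M),
      z = (MulOpposite.op s • n) ⊗ₜ[ℤ] m - n ⊗ₜ[ℤ] (s • m)}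

/-- The balanced tensor product `N ⊗_R M` of a right `R`-module and a left
`R`-module, as an abelian group (`ℤ`-module). -/
def BTensor (N : ModuleCat.{u} Rᵐᵒᵖ) (M : ModuleCat.{u} R) : Type u :=
  TensorProduct ℤ N M ⧸ brel N M

noncomputable instance (N : ModuleCat.{u} Rᵐᵒᵖ) (M : ModuleCat.{u} R) :
    AddCommGroup (BTensor N M) :=
  inferInstanceAs (AddCommGroup (TensorProduct ℤ N M ⧸ brel N M))

noncomputable instance (N : ModuleCat.{u} Rᵐᵒᵖ) (M : ModuleCat.{u} R) :
    Module ℤ (BTensor N M) :=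
  inferInstanceAs (Module ℤ (TensorProduct ℤ N M ⧸ brel N M))

/-- The map `N ⊗_R M → N ⊗_R M'` induced by an `R`-linear map `M → M'`. -/
noncomputable def bmap (N : ModuleCat.{u} Rᵐᵒᵖ) {M M' : ModuleCat.{u} R}
    (f : M ⟶ M') : BTensor N M →ₗ[ℤ] BTensor N M' :=
  Submodule.mapQ (brel N M) (brel N M')
    (LinearMap.lTensor N ((f.hom : M →ₗ[R] M').toAddMonoidHom.toIntLinearMap))
    (by
      rw [brel, Submodule.span_le]
      rintro z ⟨s, n, m, rfl⟩
      have h1 : ((f.hom : M →ₗ[R] M').toAddMonoidHom.toIntLinearMap) (s • m)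
          = s • ((f.hom : M →ₗ[R] M').toAddMonoidHom.toIntLinearMap) m :=
        (f.hom : M →ₗ[R] M').map_smul s m
      refine Submodule.mem_comap.mpr ?_
      erw [map_sub, LinearMap.lTensor_tmul, LinearMap.lTensor_tmul, h1]
      exact Submodule.subset_span
        ⟨s, n, ((f.hom : M →ₗ[R] M').toAddMonoidHom.toIntLinearMap) m, rfl⟩)

end BTensor

/-- `M` is Gorenstein flat: it arises as a kernel in an acyclic complex of flat
modules which stays acyclic after tensoring with any injective right module. -/
def IsGFlat (M : ModuleCat.{u} R) : Prop :=
  ∃ (F : ℤ → ModuleCat.{u} R) (d : ∀ i : ℤ, F i ⟶ F (i + 1)),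
    (∀ i, IsFlatMod R (F i)) ∧
    (∀ i, Function.Exact (d i) (d (i + 1))) ∧
    (∀ (I : ModuleCat.{u} Rᵐᵒᵖ), Module.Injective Rᵐᵒᵖ I →
      ∀ i : ℤ, Function.Exact (bmap I (d i)) (bmap I (d (i + 1)))) ∧
    (∃ (i : ℤ) (e : M ⟶ F i), Function.Injective e ∧ Function.Exact e (d i))


variable (R : Type u) [Ring R] in
/-- Gorenstein projective dimension. -/
noncomputable def gprojDim (M : ModuleCat.{u} R) : ℕ∞ := resDim R (IsGProj R) M

variable (R : Type u) [Ring R] in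
/-- Gorenstein injective dimension. -/
noncomputable def ginjDim (M : ModuleCat.{u} R) : ℕ∞ := coresDim R (IsGInj R) M

variable (R : Type u) [Ring R] in
/-- Gorenstein flat dimension. -/
noncomputable def gflatDim (M : ModuleCat.{u} R) : ℕ∞ := resDim R (IsGFlat R) M


section GroupAlgebra

variable (A : Type u) [CommRing A] (G : Type u) [Group G]

/-- The augmentation map of a group algebra. -/
noncomputable def aug : MonoidAlgebra A G →+* A :=
  ((MonoidAlgebra.lift A A G) 1).toRingHom

/-- `A` as the trivial left module over the group algebra `A[G]`. -/
noncomputable def trivMod : ModuleCat.{u} (MonoidAlgebra A G) :=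
  (ModuleCat.restrictScalars (aug A G)).obj (ModuleCat.of A A)

/-- The augmentation map, seen on the opposite group algebra. -/
noncomputable def augOp : (MonoidAlgebra A G)ᵐᵒᵖ →+* A :=
  (aug A G).fromOpposite (fun a b => mul_comm _ _)

/-- `A` as the trivial right module over the group algebra `A[G]`. -/
noncomputable def trivModOp : ModuleCat.{u} (MonoidAlgebra A G)ᵐᵒᵖ :=
  (ModuleCat.restrictScalars (augOp A G)).obj (ModuleCat.of A A)

/-- Restriction of an `A[G]`-module to the base ring `A`. -/
noncomputable def resA (M : ModuleCat.{u} (MonoidAlgebra A G)) : ModuleCat.{u} A :=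
  (ModuleCat.restrictScalars (algebraMap A (MonoidAlgebra A G))).obj M

/-- The ring homomorphism `A[H] → A[G]` attached to a subgroup `H ≤ G`. -/
noncomputable def subRingHom (H : Subgroup G) :
    MonoidAlgebra A (↥H) →+* MonoidAlgebra A G :=
  MonoidAlgebra.mapDomainRingHom A H.subtype

/-- Restriction of an `A[G]`-module to `A[H]` for a subgroup `H ≤ G`. -/
noncomputable def resSub (H : Subgroup G) (M : ModuleCat.{u} (MonoidAlgebra A G)) :
    ModuleCat.{u} (MonoidAlgebra A (↥H)) :=
  (ModuleCat.restrictScalars (subRingHom A G H)).obj M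

/-- The submodule of an `A[G]`-module generated by the elements `g • m - m`. -/
noncomputable def coinvRel (M : ModuleCat.{u} (MonoidAlgebra A G)) :
    Submodule (MonoidAlgebra A G) M :=
  Submodule.span (MonoidAlgebra A G)
    {x | ∃ (g : G) (m : M), x = (MonoidAlgebra.of A G g) • m - m}

/-- The module of `G`-coinvariants of an `A[G]`-module. -/
noncomputable def Coinv (M : ModuleCat.{u} (MonoidAlgebra A G)) : Type u :=
  M ⧸ coinvRel A G M

noncomputable instance (M : ModuleCat.{u} (MonoidAlgebra A G)) :
    AddCommGroup (Coinv A G M) :=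
  inferInstanceAs (AddCommGroup (M ⧸ coinvRel A G M))

/-- A group is locally finite if every finitely generated subgroup is finite. -/
def LocallyFinite (G : Type u) [Group G] : Prop :=
  ∀ H : Subgroup G, H.FG → Finite H

end GroupAlgebra

/-- A ring is `ℵ₀`-Noetherian if every (left) ideal is countably generated. -/
def Aleph0Noetherian (S : Type u) [Ring S] : Prop :=
  ∀ I : Ideal S, ∃ s : Set S, s.Countable ∧ Ideal.span s = I

/-- A projective resolution of a module, as explicit data. -/
structure ProjRes (S : Type u) [Ring S] (M : ModuleCat.{u} S) where
  P : ℕ → ModuleCat.{u} S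
  d : ∀ n : ℕ, P (n + 1) ⟶ P n
  ε : P 0 ⟶ M
  proj : ∀ n, Module.Projective S (P n)
  epi : Function.Surjective ε
  exact0 : Function.Exact (d 0) ε
  exact : ∀ n, Function.Exact (d (n + 1)) (d n)

/-- The permutation module `A[K/L]` over the group algebra `A[K]`. -/
noncomputable def permMod (A : Type u) [CommRing A] (K : Type u) [Group K]
    (L : Subgroup K) : ModuleCat.{u} (MonoidAlgebra A K) :=
  ModuleCat.of _ (Representation.ofMulAction A K (K ⧸ L)).asModule


section Stmt0Aux

variable {R : Type u} [Ring R]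

/-- `C` is a `k`-th cosyzygy (of some module), i.e. there is an exact sequence
`0 → M → I^0 → ⋯ → I^{k-1} → C → 0` with injective `I^j`. -/
private def Cosyz : ℕ → ModuleCat.{u} R → Prop
  | 0, _ => True
  | k+1, C => ∃ (D I : ModuleCat.{u} R) (d : D ⟶ I) (q : I ⟶ C),
      Module.Injective R I ∧ Function.Injective d ∧ Function.Surjective q ∧
      Function.Exact d q ∧ Cosyz k D

/-- Factor a map through an injective map whose range contains its image. -/
private lemma exists_factor_inj {Y C E : ModuleCat.{u} R} (α : C ⟶ E)
    (hα : Function.Injective α) (h : Y ⟶ E)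
    (hmem : ∀ y, ∃ c, α c = h y) :
    ∃ f : Y ⟶ C, ∀ y, α (f y) = h y := by
  have hmem' : ∀ y, h y ∈ LinearMap.range α.hom := by
    intro y; exact LinearMap.mem_range.2 (hmem y)
  let e := LinearEquiv.ofInjective α.hom hα
  refine ⟨ModuleCat.ofHom (e.symm.toLinearMap.comp (h.hom.codRestrict _ hmem')), fun y => ?_⟩
  have h1 : ∀ c : C, α c = (e c : E) := fun c => rfl
  show α (e.symm ((h.hom.codRestrict _ hmem') y)) = h y
  rw [h1, e.apply_symm_apply]
  rfl

/-- Descend a map along a surjection that kills its kernel. -/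
private lemma exists_descend {P X E : ModuleCat.{u} R} (p : P ⟶ X)
    (hp : Function.Surjective p) (h : P ⟶ E) (hker : ∀ z, p z = 0 → h z = 0) :
    ∃ σ : X ⟶ E, ∀ z, σ (p z) = h z := by
  have hle : LinearMap.ker p.hom ≤ LinearMap.ker h.hom := by
    intro z hz
    exact LinearMap.mem_ker.2 (hker z (LinearMap.mem_ker.1 hz))
  let e := p.hom.quotKerEquivOfSurjective hp
  refine ⟨ModuleCat.ofHom ((Submodule.liftQ _ h.hom hle).comp e.symm.toLinearMap), fun z => ?_⟩
  have h1 : e (Submodule.Quotient.mk z) = p z := rfl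
  have h2 : e.symm (p z) = Submodule.Quotient.mk z := by
    apply e.injective; rw [e.apply_symm_apply, h1]
  show (Submodule.liftQ _ h.hom hle) (e.symm (p z)) = h z
  rw [h2]
  exact Submodule.liftQ_apply _ _ _

private lemma punit_projective : Module.Projective R (ModuleCat.of R PUnit.{u+1}) := by
  infer_instance

/-- Padding: a projective resolution of length `k` yields one of length `k+1`. -/
private lemma projResDimLE_succ : ∀ (k : ℕ) (M : ModuleCat.{u} R),
    ResDimLE R (fun N => Module.Projective R N) k M →
    ResDimLE R (fun N => Module.Projective R N) (k + 1) M
  | 0, M, h => by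
    refine ⟨ModuleCat.of R PUnit, M, 0, 𝟙 M, h,
      fun a b _ => Subsingleton.elim a b, fun y => ⟨y, rfl⟩, ?_, punit_projective⟩
    intro y
    constructor
    · intro hy
      exact ⟨0, by simpa using hy.symm⟩
    · rintro ⟨a, rfl⟩
      rfl
  | k+1, M, h => by
    obtain ⟨K, G, ι, π, hG, hι, hπ, hex, hK⟩ := h
    exact ⟨K, G, ι, π, hG, hι, hπ, hex, projResDimLE_succ k K hK⟩

private lemma projResDimLE_mono {k l : ℕ} (hkl : k ≤ l) {M : ModuleCat.{u} R}
    (h : ResDimLE R (fun N => Module.Projective R N) k M) :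
    ResDimLE R (fun N => Module.Projective R N) l M := by
  induction hkl with
  | refl => exact h
  | step _ ih => exact projResDimLE_succ _ _ (by exact ih)

/-- The key (Ext-free) splitting lemma: if `pd X ≤ k` and `C` is a `k`-th
cosyzygy, then every short exact sequence `0 → C → E → X → 0` splits. -/
private lemma splitL : ∀ (k : ℕ) (X : ModuleCat.{u} R),
    ResDimLE R (fun N => Module.Projective R N) k X →
    ∀ (C : ModuleCat.{u} R), Cosyz k C →
    ∀ (E : ModuleCat.{u} R) (α : C ⟶ E) (π : E ⟶ X),
      Function.Injective α → Function.Surjective π → Function.Exact α π →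
      ∃ σ : X ⟶ E, ∀ x, π (σ x) = x
  | 0, X, hX, C, _, E, α, π, hα, hπ, hexact => by
    haveI : Module.Projective R X := hX
    obtain ⟨σ, hσ⟩ :=
      Module.projective_lifting_property π.hom LinearMap.id hπ
    exact ⟨ModuleCat.ofHom σ, fun x => congrArg (fun g : X →ₗ[R] X => g x) hσ⟩
  | k+1, X, hX, C, hC, E, α, π, hα, hπ, hexact => by
    obtain ⟨Y, P, ιY, p, hP, hιY, hp, hexP, hY⟩ := hX
    obtain ⟨D, I, d, q, hI, hd, hq, hexq, hD⟩ := hC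
    haveI : Module.Projective R P := hP
    -- lift p along π
    obtain ⟨h, hcomp⟩ :=
      Module.projective_lifting_property π.hom p.hom hπ
    have hπh : ∀ z : P, π (h z) = p z := fun z =>
      congrArg (fun g : P →ₗ[R] X => g z) hcomp
    -- restrict to Y, factor through C
    obtain ⟨f, hf⟩ := exists_factor_inj α hα
        (ModuleCat.ofHom (h.comp ιY.hom))
        (by
          intro y
          have h0 : π (h (ιY y)) = 0 := by
            rw [hπh]; exact (hexP (ιY y)).2 ⟨y, rfl⟩
          exact (hexact (h (ιY y))).1 h0)
    -- pullback of q : I → C along f : Y → C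
    let φ : (↑I × ↑Y) →ₗ[R] ↑C :=
      q.hom.comp (LinearMap.fst R I Y) -
        f.hom.comp (LinearMap.snd R I Y)
    let Pb : ModuleCat.{u} R := ModuleCat.of R (LinearMap.ker φ)
    have hφ : ∀ z : ↑I × ↑Y, φ z = q z.1 - f z.2 := fun z => rfl
    let α' : D ⟶ Pb :=
      ModuleCat.ofHom <| LinearMap.codRestrict (LinearMap.ker φ)
        (LinearMap.prod d.hom 0)
        (by
          intro c
          rw [LinearMap.mem_ker, hφ]
          have : q (d c) = 0 := (hexq (d c)).2 ⟨c, rfl⟩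
          simp [LinearMap.prod_apply, this])
    let π' : Pb ⟶ Y := ModuleCat.ofHom <| (LinearMap.snd R I Y).comp (LinearMap.ker φ).subtype
    have hα'val : ∀ c : D, (α' c).val = (d c, 0) := fun c => rfl
    have hα' : Function.Injective α' := by
      intro a b hab
      apply hd
      have := congrArg (fun z : ↑Pb => z.val.1) hab
      simpa [hα'val] using this
    have hπ' : Function.Surjective π' := by
      intro y
      obtain ⟨i, hi⟩ := hq (f y)
      exact ⟨⟨(i, y), by rw [LinearMap.mem_ker, hφ, hi, sub_self]⟩, rfl⟩
    have hexact' : Function.Exact α' π' := by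
      intro z
      constructor
      · intro hz
        have hz2 : z.val.2 = 0 := hz
        have hzk : φ z.val = 0 := z.2
        rw [hφ, hz2, map_zero, sub_zero] at hzk
        obtain ⟨c, hc⟩ := (hexq z.val.1).1 hzk
        refine ⟨c, ?_⟩
        apply Subtype.ext
        rw [hα'val]
        exact Prod.ext hc hz2.symm
      · rintro ⟨c, rfl⟩
        show (α' c).val.2 = 0
        rw [hα'val]
    obtain ⟨σ', hσ'⟩ := splitL k Y hY D hD Pb α' π' hα' hπ' hexact'
    -- g : Y → I with q ∘ g = f
    let g : Y ⟶ I :=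
      ModuleCat.ofHom <| ((LinearMap.fst R I Y).comp (LinearMap.ker φ).subtype).comp σ'.hom
    have hg : ∀ y, q (g y) = f y := by
      intro y
      have hk : φ (σ' y).val = 0 := (σ' y).2
      rw [hφ] at hk
      have h2 : (σ' y).val.2 = y := hσ' y
      rw [h2] at hk
      have : q ((σ' y).val.1) = f y := sub_eq_zero.1 hk
      exact this
    -- extend g along ιY using injectivity of I
    obtain ⟨G, hG⟩ := hI.out ιY.hom hιY g.hom
    -- corrected lift
    let h' : P ⟶ E :=
      ModuleCat.ofHom <| h - α.hom.comp (q.hom.comp G)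
    have hh' : ∀ z : P, h' z = h z - α (q (G z)) := fun z => rfl
    have hker : ∀ z : P, p z = 0 → h' z = 0 := by
      intro z hz
      obtain ⟨y, rfl⟩ := (hexP z).1 hz
      rw [hh', hG, hg, hf]
      show h (ιY y) - h (ιY y) = 0
      exact sub_self _
    obtain ⟨σ, hσ⟩ := exists_descend p hp h' hker
    refine ⟨σ, fun x => ?_⟩
    obtain ⟨z, rfl⟩ := hp x
    rw [hσ, hh', map_sub, hπh]
    have : π (α (q (G z))) = 0 := (hexact (α (q (G z)))).2 ⟨q (G z), rfl⟩
    rw [this, sub_zero]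

/-- A retract of an injective module is injective. -/
private lemma injective_of_retract {M G : ModuleCat.{u} R} (ι : M ⟶ G) (r : G ⟶ M)
    (hr : ∀ m, r (ι m) = m) (hG : Module.Injective R G) : Module.Injective R M := by
  constructor
  intro X Y _ _ _ _ ff hf gg
  obtain ⟨h, hh⟩ := hG.out ff hf (ι.hom.comp gg)
  refine ⟨r.hom.comp h, fun x => ?_⟩
  show r (h (ff x)) = gg x
  rw [hh]
  exact hr (gg x)

/-- Surgery lemma: if `M` is a `j`-th cosyzygy admitting an injective
coresolution of length `m+1`, and every injective module has projective
dimension `≤ j + m`, then `M` admits an injective coresolution of length `m`. -/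
private lemma surgery : ∀ (m j : ℕ) (M : ModuleCat.{u} R), Cosyz j M →
    CoresDimLE R (fun N => Module.Injective R N) (m + 1) M →
    (∀ X : ModuleCat.{u} R, Module.Injective R X →
      ResDimLE R (fun N => Module.Projective R N) (j + m) X) →
    CoresDimLE R (fun N => Module.Injective R N) m M
  | 0, j, M, hcos, hM, hinj => by
    obtain ⟨G, K, ι, π, hG, hι, hπ, hex, hK⟩ := hM
    have hK' : Module.Injective R K := hK
    have hres : ResDimLE R (fun N => Module.Projective R N) j K := hinj K hK'
    obtain ⟨σ, hσ⟩ := splitL j K hres M hcos G ι π hι hπ hex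
    -- build a retraction of ι
    let t : G ⟶ G := ModuleCat.ofHom <| LinearMap.id - σ.hom.comp π.hom
    have ht : ∀ z : G, t z = z - σ (π z) := fun z => rfl
    obtain ⟨r, hr⟩ := exists_factor_inj ι hι t
        (by
          intro z
          have h0 : π (t z) = 0 := by
            rw [ht, map_sub, hσ, sub_self]
          exact (hex (t z)).1 h0)
    have hretr : ∀ m : M, r (ι m) = m := by
      intro m
      apply hι
      rw [hr, ht]
      have h0 : π (ι m) = 0 := (hex (ι m)).2 ⟨m, rfl⟩
      rw [h0, map_zero, sub_zero]
    exact injective_of_retract ι r hretr hG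
  | m+1, j, M, hcos, hM, hinj => by
    obtain ⟨G, K, ι, π, hG, hι, hπ, hex, hK⟩ := hM
    have hcosK : Cosyz (j + 1) K := ⟨M, G, ι, π, hG, hι, hπ, hex, hcos⟩
    have hK' := surgery m (j + 1) K hcosK hK
        (fun X hX => by
          have := hinj X hX
          have heq : j + (m + 1) = j + 1 + m := by omega
          rw [heq] at this
          exact this)
    exact ⟨G, K, ι, π, hG, hι, hπ, hex, hK'⟩

end Stmt0Aux

private lemma reduceLemma {R : Type u} [Ring R] (s : ℕ)
    (hs : ∀ X : ModuleCat.{u} R, Module.Injective R X →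
      ResDimLE R (fun N => Module.Projective R N) s X) :
    ∀ (n : ℕ) (M : ModuleCat.{u} R),
      CoresDimLE R (fun N => Module.Injective R N) n M →
      CoresDimLE R (fun N => Module.Injective R N) (min n s) M := by
  intro n
  induction n with
  | zero => intro M h; simpa using h
  | succ n ih =>
    intro M h
    by_cases hns : n + 1 ≤ s
    · rw [min_eq_left hns]; exact h
    · have hsn : s ≤ n := by omega
      have h1 : CoresDimLE R (fun N => Module.Injective R N) n M :=
        surgery n 0 M trivial h
          (fun X hX => projResDimLE_mono (by omega : s ≤ 0 + n) (hs X hX))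
      have h2 := ih M h1
      rw [min_eq_right hsn] at h2
      rw [min_eq_right (by omega : s ≤ n + 1)]
      exact h2

/-- for any ring `R`, `fidim R ≤ spli R`. -/
theorem stmt0 (R : Type u) [Ring R] : fidim R ≤ spli R := by
  refine iSup_le fun M => iSup_le fun hM => ?_
  by_cases htop : spli R = ⊤
  · rw [htop]; exact le_top
  obtain ⟨s, hs⟩ := WithTop.ne_top_iff_exists.mp htop
  -- every injective module has a projective resolution of length `s`
  have hinj : ∀ X : ModuleCat.{u} R, Module.Injective R X →
      ResDimLE R (fun N => Module.Projective R N) s X := by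
    intro X hX
    have h1 : projDim R X ≤ spli R :=
      le_iSup_of_le X (le_iSup_of_le hX le_rfl)
    rw [← hs] at h1
    have hSne : {n : ℕ∞ | ∃ k : ℕ, n = (k : ℕ∞) ∧
        ResDimLE R (fun N => Module.Projective R N) k X}.Nonempty := by
      by_contra hemp
      rw [Set.not_nonempty_iff_eq_empty] at hemp
      have : projDim R X = ⊤ := by
        show sInf _ = ⊤
        rw [hemp, sInf_empty]
      rw [this] at h1
      exact (WithTop.coe_ne_top (a := s)) (top_le_iff.mp h1)
    obtain ⟨a, k, rfl, hk⟩ := hSne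
    have hTne : {k : ℕ | ResDimLE R (fun N => Module.Projective R N) k X}.Nonempty :=
      ⟨k, hk⟩
    have hk0 : ResDimLE R (fun N => Module.Projective R N) (sInf _) X :=
      Nat.sInf_mem hTne
    have hle : ((sInf {k : ℕ | ResDimLE R (fun N => Module.Projective R N) k X} : ℕ)
        : ℕ∞) ≤ projDim R X := by
      refine le_sInf ?_
      rintro b ⟨k', rfl, hk'⟩
      exact_mod_cast Nat.sInf_le hk'
    have hle2 : sInf {k : ℕ | ResDimLE R (fun N => Module.Projective R N) k X} ≤ s :=
      ENat.coe_le_coe.mp (hle.trans h1)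
    exact projResDimLE_mono hle2 hk0
  -- M has some finite injective coresolution
  have hMne : {n : ℕ∞ | ∃ k : ℕ, n = (k : ℕ∞) ∧
      CoresDimLE R (fun N => Module.Injective R N) k M}.Nonempty := by
    by_contra hemp
    rw [Set.not_nonempty_iff_eq_empty] at hemp
    apply hM
    show sInf _ = ⊤
    rw [hemp, sInf_empty]
  obtain ⟨a, n, rfl, hn⟩ := hMne
  have h2 := reduceLemma s hinj n M hn
  have h3 : injDim R M ≤ ((min n s : ℕ) : ℕ∞) :=
    sInf_le ⟨min n s, rfl, h2⟩
  refine h3.trans ?_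
  rw [← hs]
  exact ENat.coe_le_coe.mpr (min_le_right n s)

end GP
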